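/- Fix a finite nonempty set X. The 10 multilinear maps R(X,3)^5 → R(X,3) given by (a,b,c,d,e) ↦ ⟦⟦x,y,z⟧,u,v⟧, where {x,y,z} ranges over the 3-element subsets of {a,b,c,d,e} and {u,v} is the complementary 2-element subset, are linearly independent over ℚ; consequently every polynomial identity of degree 5 satisfied by ternary intermolecular recombination is a consequence of the complete symmetry identity in degree 3. -/
import Mathlib


open scoped BigOperators

/-- The tensor-like product of finitely supported functions. -/
noncomputable def tensorPi {n : ℕ} {B : Type*} (f : Fin n → (B →₀ ℚ)) :
    (Fin n → B) →₀ ℚ :=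
  haveI := Classical.decEq B
  Finsupp.onFinset (Fintype.piFinset fun j => (f j).support)
    (fun w => ∏ j, f j (w j))
    (fun w hw => by
      rw [Fintype.mem_piFinset]
      intro j
      rw [Finsupp.mem_support_iff]
      intro h0
      exact hw (Finset.prod_eq_zero (Finset.mem_univ j) h0))

/-- `R(X,n)`: the vector space over `ℚ` with basis the set `(X*)^n` of `n`-tuples of elements
of the free semigroup `X*` on `X`. -/
abbrev RXn (X : Type*) (n : ℕ) : Type _ := (Fin n → FreeSemigroup X) →₀ ℚ

/-- `n`-ary intermolecular recombination: the `ℚ`-multilinear extension of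
`⟦a_1,…,a_n⟧ = Σ_{σ ∈ S_n} (a_{σ(1),1}, a_{σ(2),2}, …, a_{σ(n),n})` on basis elements. -/
noncomputable def recomb {X : Type*} {n : ℕ} (a : Fin n → RXn X n) : RXn X n :=
  ∑ σ : Equiv.Perm (Fin n),
    tensorPi fun j => Finsupp.mapDomain (fun w => w j) (a (σ j))

/-- Ternary intermolecular recombination `⟦a,b,c⟧` on `R(X,3)`. -/
noncomputable def op3 {X : Type*} (a b c : RXn X 3) : RXn X 3 :=
  recomb ![a, b, c]

lemma tensorPi_apply {n : ℕ} {B : Type*} (f : Fin n → (B →₀ ℚ)) (w : Fin n → B) :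
    tensorPi f w = ∏ j, f j (w j) := rfl

lemma tensorPi_single {n : ℕ} {B : Type*} (s : Fin n → B) :
    tensorPi (fun j => Finsupp.single (s j) (1:ℚ)) = Finsupp.single s 1 := by
  classical
  ext w
  rw [tensorPi_apply, Finsupp.single_apply]
  by_cases h : s = w
  · subst h; simp [Finsupp.single_apply]
  · rw [if_neg h]
    obtain ⟨j, hj⟩ := Function.ne_iff.mp h
    exact Finset.prod_eq_zero (Finset.mem_univ j) (by simp [Finsupp.single_apply, hj])

lemma vec3_apply {α β : Type*} (f : α → β) (a b c : α) (m : Fin 3) :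
    ![f a, f b, f c] m = f (![a, b, c] m) := by
  fin_cases m <;> rfl

lemma op3_single {X : Type*} (u v w : Fin 3 → FreeSemigroup X) :
    op3 (Finsupp.single u 1) (Finsupp.single v 1) (Finsupp.single w 1)
      = ∑ σ : Equiv.Perm (Fin 3), Finsupp.single (fun j => ![u, v, w] (σ j) j) (1:ℚ) := by
  unfold op3 recomb
  refine Finset.sum_congr rfl fun σ _ => ?_
  have h : ∀ m : Fin 3, ![Finsupp.single u (1:ℚ), Finsupp.single v 1, Finsupp.single w 1] m
      = Finsupp.single (![u, v, w] m) (1:ℚ) := vec3_apply (fun z => Finsupp.single z 1) u v w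
  simp only [h, Finsupp.mapDomain_single]
  exact tensorPi_single _

-- additivity machinery
lemma tensorPi_update_add {n : ℕ} {B : Type*} (f : Fin n → (B →₀ ℚ)) (j0 : Fin n)
    (p q : B →₀ ℚ) :
    tensorPi (Function.update f j0 (p + q))
      = tensorPi (Function.update f j0 p) + tensorPi (Function.update f j0 q) := by
  classical
  ext w
  simp only [Finsupp.add_apply, tensorPi_apply]
  rw [Finset.prod_eq_mul_prod_sdiff_singleton_of_mem (Finset.mem_univ j0),
      Finset.prod_eq_mul_prod_sdiff_singleton_of_mem (Finset.mem_univ j0),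
      Finset.prod_eq_mul_prod_sdiff_singleton_of_mem (Finset.mem_univ j0)]
  have hrest : ∀ v : B →₀ ℚ, ∀ j ∈ Finset.univ \ {j0},
      (Function.update f j0 v j) (w j) = (f j) (w j) := by
    intro v j hj
    rw [Function.update_of_ne (by simpa using (Finset.mem_sdiff.mp hj).2)]
  rw [Finset.prod_congr rfl (hrest (p+q)), Finset.prod_congr rfl (hrest p),
      Finset.prod_congr rfl (hrest q)]
  simp [Function.update_self, Finsupp.add_apply, add_mul]

lemma tensorPi_eq_zero {n : ℕ} {B : Type*} (f : Fin n → (B →₀ ℚ)) (j0 : Fin n)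
    (h : f j0 = 0) : tensorPi f = 0 := by
  ext w
  rw [tensorPi_apply]
  exact Finset.prod_eq_zero (Finset.mem_univ j0) (by simp [h])

lemma recomb_update_add {X : Type*} {n : ℕ} (a : Fin n → RXn X n) (i0 : Fin n)
    (p q : RXn X n) :
    recomb (Function.update a i0 (p + q))
      = recomb (Function.update a i0 p) + recomb (Function.update a i0 q) := by
  classical
  unfold recomb
  rw [← Finset.sum_add_distrib]
  refine Finset.sum_congr rfl fun σ _ => ?_
  have key : ∀ v : RXn X n, (fun j => Finsupp.mapDomain (fun w => w j)
        (Function.update a i0 v (σ j)))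
      = Function.update (fun j => Finsupp.mapDomain (fun w => w j) (a (σ j)))
          (σ.symm i0) (Finsupp.mapDomain (fun w => w (σ.symm i0)) v) := by
    intro v
    funext j
    by_cases hj : j = σ.symm i0
    · subst hj; rw [Equiv.apply_symm_apply, Function.update_self, Function.update_self]
    · rw [Function.update_of_ne hj, Function.update_of_ne]
      exact fun h => hj (by simpa using congrArg σ.symm h)
  rw [key (p + q), key p, key q, Finsupp.mapDomain_add, tensorPi_update_add]

lemma recomb_update_zero {X : Type*} {n : ℕ} (a : Fin n → RXn X n) (i0 : Fin n) :
    recomb (Function.update a i0 0) = 0 := by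
  unfold recomb
  refine Finset.sum_eq_zero fun σ _ => ?_
  refine tensorPi_eq_zero _ (σ.symm i0) ?_
  rw [Equiv.apply_symm_apply, Function.update_self, Finsupp.mapDomain_zero]

lemma vec3_update0 {α : Type*} (p b c v : α) :
    Function.update ![p, b, c] 0 v = ![v, b, c] := by
  funext m; fin_cases m <;> simp [Function.update]

lemma op3_add_left {X : Type*} (p q b c : RXn X 3) :
    op3 (p + q) b c = op3 p b c + op3 q b c := by
  unfold op3
  rw [show ![p + q, b, c] = Function.update ![p, b, c] 0 (p + q) from (vec3_update0 p b c _).symm,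
     recomb_update_add, vec3_update0, vec3_update0]

lemma op3_zero_left {X : Type*} (b c : RXn X 3) : op3 0 b c = 0 := by
  unfold op3
  rw [show ![(0 : RXn X 3), b, c] = Function.update ![0, b, c] 0 0 from (vec3_update0 _ b c _).symm]
  exact recomb_update_zero _ _

noncomputable def op3Hom {X : Type*} (b c : RXn X 3) : RXn X 3 →+ RXn X 3 where
  toFun a := op3 a b c
  map_zero' := op3_zero_left b c
  map_add' p q := op3_add_left p q b c

lemma op3_sum_left {X : Type*} {ι : Type*} (s : Finset ι) (f : ι → RXn X 3) (b c : RXn X 3) :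
    op3 (∑ i ∈ s, f i) b c = ∑ i ∈ s, op3 (f i) b c :=
  map_sum (op3Hom b c) f s

section Eval
variable (X : Type*) [Nonempty X]

noncomputable def Wrd (k : ℕ) : FreeSemigroup X := ⟨Classical.arbitrary X, List.replicate k (Classical.arbitrary X)⟩

lemma Wrd_inj {a b : ℕ} (h : Wrd X a = Wrd X b) : a = b := by
  have := congrArg (fun w : FreeSemigroup X => w.2.length) h
  simpa [Wrd] using this

noncomputable def uu (k : ℕ) : RXn X 3 := Finsupp.single (fun _ => Wrd X k) 1

noncomputable def cnt (p q r s t : ℕ) (n : Fin 3 → ℕ) : ℕ :=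
  ∑ σ : Equiv.Perm (Fin 3), ∑ τ : Equiv.Perm (Fin 3),
    if (fun j => ![fun j' => ![p, q, r] (σ j'), fun _ => s, fun _ => t] (τ j) j) = n
    then 1 else 0

lemma eval_lemma (p q r s t : ℕ) (n : Fin 3 → ℕ) :
    (op3 (op3 (uu X p) (uu X q) (uu X r)) (uu X s) (uu X t)) (fun j => Wrd X (n j))
      = (cnt p q r s t n : ℚ) := by
  classical
  have hin : op3 (uu X p) (uu X q) (uu X r)
      = ∑ σ : Equiv.Perm (Fin 3),
          Finsupp.single (fun j => Wrd X (![p, q, r] (σ j))) (1:ℚ) := by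
    rw [uu, uu, uu, op3_single]
    refine Finset.sum_congr rfl fun σ _ => ?_
    congr 1
    funext j
    exact congrFun (vec3_apply (fun k => (fun _ : Fin 3 => Wrd X k)) p q r (σ j)) j
  rw [hin, op3_sum_left]
  have hout : ∀ σ : Equiv.Perm (Fin 3),
      op3 (Finsupp.single (fun j => Wrd X (![p, q, r] (σ j))) (1:ℚ)) (uu X s) (uu X t)
        = ∑ τ : Equiv.Perm (Fin 3),
            Finsupp.single
              (fun j => Wrd X (![fun j' => ![p, q, r] (σ j'), fun _ => s, fun _ => t] (τ j) j))
              (1:ℚ) := by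
    intro σ
    rw [uu, uu, op3_single]
    refine Finset.sum_congr rfl fun τ _ => ?_
    congr 1
    funext j
    have hm : ∀ m : Fin 3,
        ![fun j' => Wrd X (![p, q, r] (σ j')), (fun _ => Wrd X s), (fun _ => Wrd X t)] m
          = fun j' => Wrd X (![fun j' => ![p, q, r] (σ j'), fun _ => s, fun _ => t] m j') := by
      intro m; fin_cases m <;> rfl
    exact congrFun (hm (τ j)) j
  rw [Finset.sum_congr rfl (fun σ _ => hout σ)]
  rw [Finsupp.finset_sum_apply, cnt, Nat.cast_sum]
  refine Finset.sum_congr rfl fun σ _ => ?_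
  rw [Finsupp.finset_sum_apply, Nat.cast_sum]
  refine Finset.sum_congr rfl fun τ _ => ?_
  rw [Finsupp.single_apply]
  have hiff : ((fun j => Wrd X (![fun j' => ![p, q, r] (σ j'), fun _ => s, fun _ => t] (τ j) j))
        = fun j => Wrd X (n j))
      ↔ (fun j => ![fun j' => ![p, q, r] (σ j'), fun _ => s, fun _ => t] (τ j) j) = n := by
    constructor
    · intro h; funext j; exact Wrd_inj X (congrFun h j)
    · intro h; funext j; rw [congrFun h j]
  rw [if_congr hiff rfl rfl]
  split <;> simp

end Eval

/-- The 10 degree-5 multilinear monomials `⟦⟦x,y,z⟧,u,v⟧` for the completely symmetric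
ternary operation, in the lexicographic order of the paper ({x,y,z} ranges over the
3-element subsets of {a,b,c,d,e} and {u,v} is the complementary pair). -/
noncomputable def mons5 {X : Type*} :
    Fin 10 → (RXn X 3 → RXn X 3 → RXn X 3 → RXn X 3 → RXn X 3 → RXn X 3) :=
  ![fun a b c d e => op3 (op3 a b c) d e,
    fun a b c d e => op3 (op3 a b d) c e,
    fun a b c d e => op3 (op3 a b e) c d,
    fun a b c d e => op3 (op3 a c d) b e,
    fun a b c d e => op3 (op3 a c e) b d,
    fun a b c d e => op3 (op3 a d e) b c,
    fun a b c d e => op3 (op3 b c d) a e,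
    fun a b c d e => op3 (op3 b c e) a d,
    fun a b c d e => op3 (op3 b d e) a c,
    fun a b c d e => op3 (op3 c d e) a b]

lemma sum_univ_ten {M : Type*} [AddCommMonoid M] (f : Fin 10 → M) :
    ∑ i, f i = f 0 + f 1 + f 2 + f 3 + f 4 + f 5 + f 6 + f 7 + f 8 + f 9 := by
  rw [show (Finset.univ : Finset (Fin 10)) = {0,1,2,3,4,5,6,7,8,9} from rfl]
  rw [Finset.sum_insert (by decide), Finset.sum_insert (by decide), Finset.sum_insert (by decide),
    Finset.sum_insert (by decide), Finset.sum_insert (by decide), Finset.sum_insert (by decide),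
    Finset.sum_insert (by decide), Finset.sum_insert (by decide), Finset.sum_insert (by decide),
    Finset.sum_singleton]
  simp [add_assoc]

lemma mons5_0 {X : Type*} : mons5 (X := X) 0 = (fun a b c d e => op3 (op3 a b c) d e) := rfl

lemma mons5_1 {X : Type*} : mons5 (X := X) 1 = (fun a b c d e => op3 (op3 a b d) c e) := rfl

lemma mons5_2 {X : Type*} : mons5 (X := X) 2 = (fun a b c d e => op3 (op3 a b e) c d) := rfl

lemma mons5_3 {X : Type*} : mons5 (X := X) 3 = (fun a b c d e => op3 (op3 a c d) b e) := rfl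

lemma mons5_4 {X : Type*} : mons5 (X := X) 4 = (fun a b c d e => op3 (op3 a c e) b d) := rfl

lemma mons5_5 {X : Type*} : mons5 (X := X) 5 = (fun a b c d e => op3 (op3 a d e) b c) := rfl

lemma mons5_6 {X : Type*} : mons5 (X := X) 6 = (fun a b c d e => op3 (op3 b c d) a e) := rfl

lemma mons5_7 {X : Type*} : mons5 (X := X) 7 = (fun a b c d e => op3 (op3 b c e) a d) := rfl

lemma mons5_8 {X : Type*} : mons5 (X := X) 8 = (fun a b c d e => op3 (op3 b d e) a c) := rfl

lemma mons5_9 {X : Type*} : mons5 (X := X) 9 = (fun a b c d e => op3 (op3 c d e) a b) := rfl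

/-- the 10 degree-5 multilinear maps `(a,b,c,d,e) ↦ ⟦⟦x,y,z⟧,u,v⟧` are
linearly independent over `ℚ`; consequently every polynomial identity of degree 5
satisfied by ternary intermolecular recombination is a consequence of the complete
symmetry identity in degree 3 (i.e., only the trivial linear combination of the 10
canonical degree-5 monomials vanishes identically). -/
theorem degree5_monomials_linearly_independent {X : Type*} [Fintype X] [Nonempty X] :
    LinearIndependent ℚ (mons5 (X := X)) := by
  classical
  rw [Fintype.linearIndependent_iff]
  intro g hg
  have happ : ∀ n : Fin 3 → ℕ,
      ∑ k : Fin 10, g k * (mons5 k (uu X 0) (uu X 1) (uu X 2) (uu X 3) (uu X 4)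
        : RXn X 3) (fun j => Wrd X (n j)) = 0 := by
    intro n
    have h1 := congrFun (congrFun (congrFun (congrFun (congrFun hg
      (uu X 0)) (uu X 1)) (uu X 2)) (uu X 3)) (uu X 4)
    simp only [Finset.sum_apply, Pi.smul_apply, Pi.zero_apply] at h1
    have h2 := congrFun (congrArg DFunLike.coe h1) (fun j => Wrd X (n j))
    simpa [Finsupp.finset_sum_apply, Finsupp.smul_apply, smul_eq_mul] using h2
  have key : ∀ n : Fin 3 → ℕ, g 0 * (cnt 0 1 2 3 4 n : ℚ) + g 1 * (cnt 0 1 3 2 4 n : ℚ) + g 2 * (cnt 0 1 4 2 3 n : ℚ) + g 3 * (cnt 0 2 3 1 4 n : ℚ) + g 4 * (cnt 0 2 4 1 3 n : ℚ) + g 5 * (cnt 0 3 4 1 2 n : ℚ) + g 6 * (cnt 1 2 3 0 4 n : ℚ) + g 7 * (cnt 1 2 4 0 3 n : ℚ) + g 8 * (cnt 1 3 4 0 2 n : ℚ) + g 9 * (cnt 2 3 4 0 1 n : ℚ) = 0 := by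
    intro n
    have h := happ n
    rw [sum_univ_ten] at h
    simp only [mons5_0, mons5_1, mons5_2, mons5_3, mons5_4, mons5_5, mons5_6, mons5_7, mons5_8, mons5_9] at h
    simp only [eval_lemma] at h
    exact h
  have e0 := key ![0,1,2]
  rw [show cnt 0 1 2 3 4 ![0,1,2] = 0 from by decide, show cnt 0 1 3 2 4 ![0,1,2] = 0 from by decide, show cnt 0 1 4 2 3 ![0,1,2] = 0 from by decide, show cnt 0 2 3 1 4 ![0,1,2] = 0 from by decide, show cnt 0 2 4 1 3 ![0,1,2] = 0 from by decide, show cnt 0 3 4 1 2 ![0,1,2] = 2 from by decide, show cnt 1 2 3 0 4 ![0,1,2] = 0 from by decide, show cnt 1 2 4 0 3 ![0,1,2] = 0 from by decide, show cnt 1 3 4 0 2 ![0,1,2] = 2 from by decide, show cnt 2 3 4 0 1 ![0,1,2] = 2 from by decide] at e0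
  norm_num at e0
  have e1 := key ![0,1,3]
  rw [show cnt 0 1 2 3 4 ![0,1,3] = 0 from by decide, show cnt 0 1 3 2 4 ![0,1,3] = 0 from by decide, show cnt 0 1 4 2 3 ![0,1,3] = 0 from by decide, show cnt 0 2 3 1 4 ![0,1,3] = 0 from by decide, show cnt 0 2 4 1 3 ![0,1,3] = 2 from by decide, show cnt 0 3 4 1 2 ![0,1,3] = 0 from by decide, show cnt 1 2 3 0 4 ![0,1,3] = 0 from by decide, show cnt 1 2 4 0 3 ![0,1,3] = 2 from by decide, show cnt 1 3 4 0 2 ![0,1,3] = 0 from by decide, show cnt 2 3 4 0 1 ![0,1,3] = 2 from by decide] at e1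
  norm_num at e1
  have e2 := key ![0,1,4]
  rw [show cnt 0 1 2 3 4 ![0,1,4] = 0 from by decide, show cnt 0 1 3 2 4 ![0,1,4] = 0 from by decide, show cnt 0 1 4 2 3 ![0,1,4] = 0 from by decide, show cnt 0 2 3 1 4 ![0,1,4] = 2 from by decide, show cnt 0 2 4 1 3 ![0,1,4] = 0 from by decide, show cnt 0 3 4 1 2 ![0,1,4] = 0 from by decide, show cnt 1 2 3 0 4 ![0,1,4] = 2 from by decide, show cnt 1 2 4 0 3 ![0,1,4] = 0 from by decide, show cnt 1 3 4 0 2 ![0,1,4] = 0 from by decide, show cnt 2 3 4 0 1 ![0,1,4] = 2 from by decide] at e2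
  norm_num at e2
  have e3 := key ![0,2,3]
  rw [show cnt 0 1 2 3 4 ![0,2,3] = 0 from by decide, show cnt 0 1 3 2 4 ![0,2,3] = 0 from by decide, show cnt 0 1 4 2 3 ![0,2,3] = 2 from by decide, show cnt 0 2 3 1 4 ![0,2,3] = 0 from by decide, show cnt 0 2 4 1 3 ![0,2,3] = 0 from by decide, show cnt 0 3 4 1 2 ![0,2,3] = 0 from by decide, show cnt 1 2 3 0 4 ![0,2,3] = 0 from by decide, show cnt 1 2 4 0 3 ![0,2,3] = 2 from by decide, show cnt 1 3 4 0 2 ![0,2,3] = 2 from by decide, show cnt 2 3 4 0 1 ![0,2,3] = 0 from by decide] at e3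
  norm_num at e3
  have e4 := key ![0,2,4]
  rw [show cnt 0 1 2 3 4 ![0,2,4] = 0 from by decide, show cnt 0 1 3 2 4 ![0,2,4] = 2 from by decide, show cnt 0 1 4 2 3 ![0,2,4] = 0 from by decide, show cnt 0 2 3 1 4 ![0,2,4] = 0 from by decide, show cnt 0 2 4 1 3 ![0,2,4] = 0 from by decide, show cnt 0 3 4 1 2 ![0,2,4] = 0 from by decide, show cnt 1 2 3 0 4 ![0,2,4] = 2 from by decide, show cnt 1 2 4 0 3 ![0,2,4] = 0 from by decide, show cnt 1 3 4 0 2 ![0,2,4] = 2 from by decide, show cnt 2 3 4 0 1 ![0,2,4] = 0 from by decide] at e4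
  norm_num at e4
  have e5 := key ![0,3,4]
  rw [show cnt 0 1 2 3 4 ![0,3,4] = 2 from by decide, show cnt 0 1 3 2 4 ![0,3,4] = 0 from by decide, show cnt 0 1 4 2 3 ![0,3,4] = 0 from by decide, show cnt 0 2 3 1 4 ![0,3,4] = 0 from by decide, show cnt 0 2 4 1 3 ![0,3,4] = 0 from by decide, show cnt 0 3 4 1 2 ![0,3,4] = 0 from by decide, show cnt 1 2 3 0 4 ![0,3,4] = 2 from by decide, show cnt 1 2 4 0 3 ![0,3,4] = 2 from by decide, show cnt 1 3 4 0 2 ![0,3,4] = 0 from by decide, show cnt 2 3 4 0 1 ![0,3,4] = 0 from by decide] at e5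
  norm_num at e5
  have e6 := key ![1,2,3]
  rw [show cnt 0 1 2 3 4 ![1,2,3] = 0 from by decide, show cnt 0 1 3 2 4 ![1,2,3] = 0 from by decide, show cnt 0 1 4 2 3 ![1,2,3] = 2 from by decide, show cnt 0 2 3 1 4 ![1,2,3] = 0 from by decide, show cnt 0 2 4 1 3 ![1,2,3] = 2 from by decide, show cnt 0 3 4 1 2 ![1,2,3] = 2 from by decide, show cnt 1 2 3 0 4 ![1,2,3] = 0 from by decide, show cnt 1 2 4 0 3 ![1,2,3] = 0 from by decide, show cnt 1 3 4 0 2 ![1,2,3] = 0 from by decide, show cnt 2 3 4 0 1 ![1,2,3] = 0 from by decide] at e6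
  norm_num at e6
  have e7 := key ![1,2,4]
  rw [show cnt 0 1 2 3 4 ![1,2,4] = 0 from by decide, show cnt 0 1 3 2 4 ![1,2,4] = 2 from by decide, show cnt 0 1 4 2 3 ![1,2,4] = 0 from by decide, show cnt 0 2 3 1 4 ![1,2,4] = 2 from by decide, show cnt 0 2 4 1 3 ![1,2,4] = 0 from by decide, show cnt 0 3 4 1 2 ![1,2,4] = 2 from by decide, show cnt 1 2 3 0 4 ![1,2,4] = 0 from by decide, show cnt 1 2 4 0 3 ![1,2,4] = 0 from by decide, show cnt 1 3 4 0 2 ![1,2,4] = 0 from by decide, show cnt 2 3 4 0 1 ![1,2,4] = 0 from by decide] at e7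
  norm_num at e7
  have e8 := key ![1,3,4]
  rw [show cnt 0 1 2 3 4 ![1,3,4] = 2 from by decide, show cnt 0 1 3 2 4 ![1,3,4] = 0 from by decide, show cnt 0 1 4 2 3 ![1,3,4] = 0 from by decide, show cnt 0 2 3 1 4 ![1,3,4] = 2 from by decide, show cnt 0 2 4 1 3 ![1,3,4] = 2 from by decide, show cnt 0 3 4 1 2 ![1,3,4] = 0 from by decide, show cnt 1 2 3 0 4 ![1,3,4] = 0 from by decide, show cnt 1 2 4 0 3 ![1,3,4] = 0 from by decide, show cnt 1 3 4 0 2 ![1,3,4] = 0 from by decide, show cnt 2 3 4 0 1 ![1,3,4] = 0 from by decide] at e8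
  norm_num at e8
  have e9 := key ![2,3,4]
  rw [show cnt 0 1 2 3 4 ![2,3,4] = 2 from by decide, show cnt 0 1 3 2 4 ![2,3,4] = 2 from by decide, show cnt 0 1 4 2 3 ![2,3,4] = 2 from by decide, show cnt 0 2 3 1 4 ![2,3,4] = 0 from by decide, show cnt 0 2 4 1 3 ![2,3,4] = 0 from by decide, show cnt 0 3 4 1 2 ![2,3,4] = 0 from by decide, show cnt 1 2 3 0 4 ![2,3,4] = 0 from by decide, show cnt 1 2 4 0 3 ![2,3,4] = 0 from by decide, show cnt 1 3 4 0 2 ![2,3,4] = 0 from by decide, show cnt 2 3 4 0 1 ![2,3,4] = 0 from by decide] at e9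
  norm_num at e9
  have h0 : g 0 = 0 := by linarith
  have h1 : g 1 = 0 := by linarith
  have h2 : g 2 = 0 := by linarith
  have h3 : g 3 = 0 := by linarith
  have h4 : g 4 = 0 := by linarith
  have h5 : g 5 = 0 := by linarith
  have h6 : g 6 = 0 := by linarith
  have h7 : g 7 = 0 := by linarith
  have h8 : g 8 = 0 := by linarith
  have h9 : g 9 = 0 := by linarith
  intro i
  fin_cases i
  · exact h0
  · exact h1
  · exact h2
  · exact h3
  · exact h4
  · exact h5
  · exact h6
  · exact h7
  · exact h8
  · exact h9
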